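/- Suppose the coordinate process {A_n, n ≥ 1} is ψ-mixing and E(A_1^s) < ∞ for each 0 < s < 1. Then for every 0 < t < 1 and every ε > 0 there exists N > 0 such that for every integrable function g measurable with respect to σ(A_N, A_{N+1}, …), E(X_1^{−t}·|g|) ≤ (1 + ε)²·E(X_1^{−t})·E(|g|). -/

import Mathlib

open Filter MeasureTheory Real Topology

instance : MeasurableSpace ℕ+ := ⊤

/-- `cfP a n` is the continued fraction numerator `P_{n-1}` of the sequence
`a 1, a 2, …` (so `cfP a 0 = P_{-1} = 1`, `cfP a 1 = P_0 = 0`, and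
`P_n = a_n P_{n-1} + P_{n-2}` for `n ≥ 1`). -/
def cfP (a : ℕ → ℕ) : ℕ → ℤ
  | 0 => 1
  | 1 => 0
  | n + 2 => (a (n + 1) : ℤ) * cfP a (n + 1) + cfP a n

/-- `cfQ a n` is the continued fraction denominator `Q_{n-1}` of the sequence
`a 1, a 2, …` (so `cfQ a 0 = Q_{-1} = 0`, `cfQ a 1 = Q_0 = 1`, and
`Q_n = a_n Q_{n-1} + Q_{n-2}` for `n ≥ 1`). -/
def cfQ (a : ℕ → ℕ) : ℕ → ℤ
  | 0 => 0
  | 1 => 1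
  | n + 2 => (a (n + 1) : ℤ) * cfQ a (n + 1) + cfQ a n

/-- The `n`-th convergent `P_n / Q_n = [a_1, …, a_n]`. -/
noncomputable def cfConv (a : ℕ → ℕ) (n : ℕ) : ℝ :=
  (cfP a (n + 1) : ℝ) / (cfQ a (n + 1) : ℝ)

/-- The value `[a_1, a_2, …]` of the infinite continued fraction, as the limit
of the convergents. -/
noncomputable def cfVal (a : ℕ → ℕ) : ℝ := limUnder atTop (cfConv a)

/-- The left shift on `{1,2,3,…}^ℕ` (coordinate `n-1` of `ω` is `A_n(ω)`). -/
def shiftS : (ℕ → ℕ+) → (ℕ → ℕ+) := fun ω n => ω (n + 1)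

/-- `Xtail ω k = X_k(ω) = [A_k(ω), A_{k+1}(ω), …]` for `k ≥ 1`, where
`A_n(ω) = ω (n-1)`. -/
noncomputable def Xtail (ω : ℕ → ℕ+) (k : ℕ) : ℝ :=
  cfVal (fun i => (ω (i + k - 2) : ℕ))

/-- `Qent ω n = Q_n(ω)`, the denominator of the convergent `[A_1(ω), …, A_n(ω)]`. -/
def Qent (ω : ℕ → ℕ+) (n : ℕ) : ℤ := cfQ (fun i => (ω (i - 1) : ℕ)) (n + 1)

/-- The σ-algebra `σ(A_1, …, A_m)` generated by the first `m` coordinates. -/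
def finAlg (m : ℕ) : MeasurableSpace (ℕ → ℕ+) :=
  MeasurableSpace.comap (fun ω (i : Fin m) => ω i) inferInstance

/-- The σ-algebra `σ(A_{j+1}, A_{j+2}, …)` generated by the coordinates of
index `≥ j`, i.e. by `A_{j+1}, A_{j+2}, …`. -/
def tailAlg (j : ℕ) : MeasurableSpace (ℕ → ℕ+) :=
  MeasurableSpace.comap (fun ω (i : ℕ) => ω (i + j)) inferInstance

/-- The process `{A_n, n ≥ 1}` is ψ-mixing: it is stationary (the left shift
preserves `P`) and there is `ψ : ℕ → [0,∞)` with `ψ(n) → 0` such that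
`|E(fg) − E(f)E(g)| ≤ ψ(n) E|f| E|g|` for all `m, n ≥ 1`, every integrable
`f ∈ σ(A_1,…,A_m)` and every integrable `g ∈ σ(A_{m+n}, A_{m+n+1}, …)`. -/
def PsiMixing (P : Measure (ℕ → ℕ+)) : Prop :=
  MeasurePreserving shiftS P P ∧
  ∃ ψ : ℕ → ℝ, (∀ n, 0 ≤ ψ n) ∧ Tendsto ψ atTop (𝓝 0) ∧
    ∀ m n : ℕ, 1 ≤ m → 1 ≤ n → ∀ f g : (ℕ → ℕ+) → ℝ,
      Integrable f P → Integrable g P →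
      Measurable[finAlg m] f → Measurable[tailAlg (m + n - 1)] g →
      |(∫ ω, f ω * g ω ∂P) - (∫ ω, f ω ∂P) * (∫ ω, g ω ∂P)| ≤
        ψ n * (∫ ω, |f ω| ∂P) * (∫ ω, |g ω| ∂P)

/-!
The value `X_1` lies between any two consecutive convergents, and their gap is tiny relative to
the smaller one: for `m` large the larger convergent `U` of order `m` is a `σ(A_1, …, A_m)`-
measurable function with `X_1 ≤ U ≤ (1 + ε) X_1`. Hence `U^{-t} ≤ X_1^{-t} ≤ (1 + ε) U^{-t}`,
and ψ-mixing across a gap `n` with `ψ(n) ≤ ε` gives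
`E(U^{-t} |g|) ≤ (1 + ε) E(U^{-t}) E|g|` for `g` measurable with respect to `σ(A_{m+n}, …)`.
Integrability comes from `X_1 ≥ 1 / (A_1 + 1)`, so that `X_1^{-t} ≤ 2^t A_1^t`.
-/

open Set

lemma cfQ_nonneg (a : ℕ → ℕ) : ∀ n, 0 ≤ cfQ a n
  | 0 => le_rfl
  | 1 => zero_le_one
  | n + 2 => by
    have := cfQ_nonneg a n
    have := cfQ_nonneg a (n + 1)
    simp only [cfQ]
    positivity

lemma cfP_succ_eq_cfQ_shift (a : ℕ → ℕ) : ∀ n, cfP a (n + 1) = cfQ (fun i => a (i + 1)) n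
  | 0 => rfl
  | 1 => rfl
  | n + 2 => by
    rw [cfP, cfQ, cfP_succ_eq_cfQ_shift a n, cfP_succ_eq_cfQ_shift a (n + 1)]

lemma cfP_mul_cfQ_sub (a : ℕ → ℕ) :
    ∀ n, cfP a (n + 2) * cfQ a (n + 1) - cfP a (n + 1) * cfQ a (n + 2) = (-1) ^ n
  | 0 => by simp [cfP, cfQ]
  | n + 1 => by
    have h := cfP_mul_cfQ_sub a n
    show ((a (n + 2) : ℤ) * cfP a (n + 2) + cfP a (n + 1)) * cfQ a (n + 2)
        - cfP a (n + 2) * ((a (n + 2) : ℤ) * cfQ a (n + 2) + cfQ a (n + 1)) = (-1) ^ (n + 1)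
    rw [pow_succ, ← h]
    ring

lemma cfP_congr {a b : ℕ → ℕ} :
    ∀ n, (∀ i, i + 1 < n → a (i + 1) = b (i + 1)) → cfP a n = cfP b n
  | 0, _ => rfl
  | 1, _ => rfl
  | n + 2, h => by
    rw [cfP, cfP, h n (by omega), cfP_congr (n + 1) fun i hi => h i (by omega),
      cfP_congr n fun i hi => h i (by omega)]

lemma cfQ_congr {a b : ℕ → ℕ} :
    ∀ n, (∀ i, i + 1 < n → a (i + 1) = b (i + 1)) → cfQ a n = cfQ b n
  | 0, _ => rfl
  | 1, _ => rfl
  | n + 2, h => by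
    rw [cfQ, cfQ, h n (by omega), cfQ_congr (n + 1) fun i hi => h i (by omega),
      cfQ_congr n fun i hi => h i (by omega)]

lemma cfConv_congr {a b : ℕ → ℕ} (n : ℕ) (h : ∀ i < n, a (i + 1) = b (i + 1)) :
    cfConv a n = cfConv b n := by
  rw [cfConv, cfConv, cfP_congr (n + 1) fun i hi => h i (by omega),
    cfQ_congr (n + 1) fun i hi => h i (by omega)]

section Positive

variable {a : ℕ → ℕ} (ha : ∀ i, 1 ≤ a (i + 1))
include ha

lemma one_le_cfQ : ∀ n, 1 ≤ cfQ a (n + 1)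
  | 0 => le_rfl
  | n + 1 => by
    have h1 := one_le_cfQ n
    have h2 := cfQ_nonneg a n
    have h3 : (1 : ℤ) ≤ a (n + 1) := by exact_mod_cast ha n
    rw [cfQ]
    nlinarith

lemma cfQ_monotone : Monotone (cfQ a) := by
  refine monotone_nat_of_le_succ fun n => ?_
  cases n with
  | zero => exact zero_le_one
  | succ n =>
    have h1 := cfQ_nonneg a n
    have h2 := cfQ_nonneg a (n + 1)
    have h3 : (1 : ℤ) ≤ a (n + 1) := by exact_mod_cast ha n
    rw [cfQ]
    nlinarith

lemma two_mul_cfQ_le (n : ℕ) : 2 * cfQ a (n + 1) ≤ cfQ a (n + 3) := by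
  have h1 := cfQ_monotone ha (Nat.le_succ (n + 1))
  have h2 := cfQ_nonneg a (n + 2)
  have h3 : (1 : ℤ) ≤ a (n + 2) := by exact_mod_cast ha (n + 1)
  rw [cfQ]
  nlinarith

lemma two_pow_le_cfQ : ∀ k, (2 : ℤ) ^ k ≤ cfQ a (2 * k + 2)
  | 0 => one_le_cfQ ha 1
  | k + 1 => by
    have h1 : 2 * cfQ a (2 * k + 2) ≤ cfQ a (2 * (k + 1) + 2) := two_mul_cfQ_le ha (2 * k + 1)
    have h2 := two_pow_le_cfQ k
    rw [pow_succ]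
    omega

lemma two_pow_le_cfQ_mul_cfQ : ∀ n, (2 : ℤ) ^ n ≤ cfQ a (n + 1) * cfQ a (n + 2)
  | 0 => by simpa [cfQ] using one_le_cfQ ha 1
  | n + 1 => by
    have h1 := two_pow_le_cfQ_mul_cfQ n
    have h2 := two_mul_cfQ_le ha n
    have h3 := one_le_cfQ ha (n + 1)
    rw [pow_succ]
    nlinarith

lemma one_le_cfP (n : ℕ) : 1 ≤ cfP a (n + 2) := by
  rw [cfP_succ_eq_cfQ_shift]
  exact one_le_cfQ (fun i => ha (i + 1)) n

lemma cfP_le_cfP_succ (n : ℕ) : cfP a (n + 1) ≤ cfP a (n + 2) := by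
  rw [cfP_succ_eq_cfQ_shift, cfP_succ_eq_cfQ_shift]
  exact cfQ_monotone (fun i => ha (i + 1)) (Nat.le_succ n)

lemma cfQ_succ_pos (n : ℕ) : (0 : ℝ) < cfQ a (n + 1) := by
  exact_mod_cast one_le_cfQ ha n

lemma cfConv_succ_sub (n : ℕ) :
    cfConv a (n + 1) - cfConv a n = (-1) ^ n / ((cfQ a (n + 1) : ℝ) * cfQ a (n + 2)) := by
  have h1 := cfQ_succ_pos ha n
  have h2 := cfQ_succ_pos ha (n + 1)
  have hdet : ((cfP a (n + 2) * cfQ a (n + 1) - cfP a (n + 1) * cfQ a (n + 2) : ℤ) : ℝ)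
      = (-1) ^ n := by
    rw [cfP_mul_cfQ_sub]
    push_cast
    ring
  rw [cfConv, cfConv, div_sub_div _ _ h2.ne' h1.ne', ← hdet]
  push_cast
  ring

lemma abs_cfConv_succ_sub (n : ℕ) :
    |cfConv a (n + 1) - cfConv a n| = 1 / ((cfQ a (n + 1) : ℝ) * cfQ a (n + 2)) := by
  have h1 := cfQ_succ_pos ha n
  have h2 := cfQ_succ_pos ha (n + 1)
  rw [cfConv_succ_sub ha, abs_div, abs_pow, abs_neg, abs_one, one_pow, abs_of_pos (by positivity)]

lemma cfConv_succ_succ_sub (n : ℕ) :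
    cfConv a (n + 2) - cfConv a (n + 1)
      = ((cfQ a (n + 1) : ℝ) / cfQ a (n + 3)) * (cfConv a n - cfConv a (n + 1)) := by
  have h1 := cfQ_succ_pos ha n
  have h2 := cfQ_succ_pos ha (n + 1)
  have h3 := cfQ_succ_pos ha (n + 2)
  rw [cfConv_succ_sub ha (n + 1), ← neg_sub, cfConv_succ_sub ha n]
  field_simp
  ring

lemma cfConv_succ_succ_mem_uIcc (n : ℕ) :
    cfConv a (n + 2) ∈ uIcc (cfConv a n) (cfConv a (n + 1)) := by
  have h1 := cfQ_succ_pos ha n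
  have h3 := cfQ_succ_pos ha (n + 2)
  have hle : (cfQ a (n + 1) : ℝ) ≤ cfQ a (n + 3) := by
    exact_mod_cast cfQ_monotone ha (by omega : n + 1 ≤ n + 3)
  have key := (convex_uIcc (cfConv a (n + 1)) (cfConv a n)).add_smul_sub_mem
    left_mem_uIcc right_mem_uIcc
    ⟨(div_pos h1 h3).le, (div_le_one h3).2 hle⟩
  rw [smul_eq_mul, ← cfConv_succ_succ_sub ha, add_sub_cancel, uIcc_comm] at key
  exact key

lemma uIcc_cfConv_antitone : Antitone fun n => uIcc (cfConv a n) (cfConv a (n + 1)) :=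
  antitone_nat_of_succ_le fun n =>
    uIcc_subset_uIcc right_mem_uIcc (cfConv_succ_succ_mem_uIcc ha n)

lemma tendsto_cfConv : Tendsto (cfConv a) atTop (𝓝 (cfVal a)) := by
  have hdist : ∀ n, dist (cfConv a n) (cfConv a (n + 1)) ≤ 1 * (1 / 2) ^ n := by
    intro n
    have hQQ : (2 : ℝ) ^ n ≤ (cfQ a (n + 1) : ℝ) * cfQ a (n + 2) := by
      exact_mod_cast two_pow_le_cfQ_mul_cfQ ha n
    rw [dist_comm, Real.dist_eq, abs_cfConv_succ_sub ha, one_mul, one_div_pow]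
    exact one_div_le_one_div_of_le (by positivity) hQQ
  obtain ⟨l, hl⟩ := cauchySeq_tendsto_of_complete
    (cauchySeq_of_le_geometric (1 / 2) 1 (by norm_num) hdist)
  rwa [cfVal, hl.limUnder_eq]

lemma cfVal_mem_uIcc (n : ℕ) : cfVal a ∈ uIcc (cfConv a n) (cfConv a (n + 1)) :=
  isClosed_Icc.mem_of_tendsto (tendsto_cfConv ha)
    (eventually_atTop.2 ⟨n, fun _ hk => uIcc_cfConv_antitone ha hk left_mem_uIcc⟩)

lemma one_div_succ_le_cfVal : 1 / ((a 1 : ℝ) + 1) ≤ cfVal a := by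
  have ha1 : (1 : ℝ) ≤ a 1 := by exact_mod_cast ha 0
  have ha2 : (1 : ℝ) ≤ a 2 := by exact_mod_cast ha 1
  have hc1 : cfConv a 1 = 1 / a 1 := by simp [cfConv, cfP, cfQ]
  have hc2 : cfConv a 2 = a 2 / (a 2 * a 1 + 1) := by simp [cfConv, cfP, cfQ]
  refine le_trans (le_min ?_ ?_) (cfVal_mem_uIcc ha 1).1
  · rw [hc1]
    exact one_div_le_one_div_of_le (by positivity) (by linarith)
  · rw [hc2, div_le_div_iff₀ (by positivity) (by positivity)]
    nlinarith

/-- The gap between consecutive convergents is `1 / (cfQ a (n + 1) * cfQ a (n + 2))`, while the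
smaller of them is at least `cfP a (n + 1) / cfQ a (n + 2) ≥ 1 / cfQ a (n + 2)`. -/
lemma max_cfConv_le {n : ℕ} (hn : 1 ≤ n) :
    max (cfConv a n) (cfConv a (n + 1)) ≤ (1 + 1 / (cfQ a (n + 1) : ℝ)) * cfVal a := by
  obtain ⟨n, rfl⟩ := Nat.exists_eq_add_of_le' hn
  have hq1 := cfQ_succ_pos ha (n + 1)
  have hq2 := cfQ_succ_pos ha (n + 2)
  have hq12 : (cfQ a (n + 2) : ℝ) ≤ cfQ a (n + 3) := by exact_mod_cast cfQ_monotone ha (by omega)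
  have hp1 : (1 : ℝ) ≤ cfP a (n + 2) := by exact_mod_cast one_le_cfP ha n
  have hp12 : (cfP a (n + 2) : ℝ) ≤ cfP a (n + 3) := by exact_mod_cast cfP_le_cfP_succ ha (n + 1)
  set L := min (cfConv a (n + 1)) (cfConv a (n + 2))
  have hmin : (cfP a (n + 2) : ℝ) / cfQ a (n + 3) ≤ L :=
    le_min (div_le_div_of_nonneg_left (by positivity) hq1 hq12)
      (div_le_div_of_nonneg_right hp12 hq2.le)
  have hgap : |cfConv a (n + 2) - cfConv a (n + 1)| ≤ L / cfQ a (n + 2) := by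
    rw [le_div_iff₀ hq1]
    calc |cfConv a (n + 2) - cfConv a (n + 1)| * cfQ a (n + 2) = 1 / (cfQ a (n + 3) : ℝ) := by
          rw [abs_cfConv_succ_sub ha]
          field_simp
      _ ≤ (cfP a (n + 2) : ℝ) / cfQ a (n + 3) := div_le_div_of_nonneg_right hp1 hq2.le
      _ ≤ L := hmin
  have hL : L ≤ cfVal a := (cfVal_mem_uIcc ha (n + 1)).1
  have hmax := max_sub_min_eq_abs (cfConv a (n + 1)) (cfConv a (n + 2))
  calc max (cfConv a (n + 1)) (cfConv a (n + 2))
      = L + |cfConv a (n + 2) - cfConv a (n + 1)| := by linarith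
    _ ≤ L + L / cfQ a (n + 2) := by gcongr
    _ = (1 + 1 / (cfQ a (n + 2) : ℝ)) * L := by ring
    _ ≤ (1 + 1 / (cfQ a (n + 2) : ℝ)) * cfVal a := by gcongr

end Positive

lemma integral_mul_le_of_le_of_le_mul {Ω : Type*} [MeasurableSpace Ω] {μ : Measure Ω}
    {Y Z h : Ω → ℝ} {c C : ℝ} (hY : Integrable Y μ) (hZ : Integrable Z μ)
    (hh : AEStronglyMeasurable h μ) (hY0 : ∀ ω, 0 ≤ Y ω) (hYZ : ∀ ω, Y ω ≤ Z ω)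
    (hZY : ∀ ω, Z ω ≤ c * Y ω) (hh0 : ∀ ω, 0 ≤ h ω) (hc : 0 ≤ c) (hC : 0 ≤ C)
    (hYh : ∫ ω, Y ω * h ω ∂μ ≤ C * (∫ ω, Y ω ∂μ) * ∫ ω, h ω ∂μ) :
    ∫ ω, Z ω * h ω ∂μ ≤ c * C * (∫ ω, Z ω ∂μ) * ∫ ω, h ω ∂μ := by
  have hZ0 : ∀ ω, 0 ≤ Z ω := fun ω => (hY0 ω).trans (hYZ ω)
  have hrhs : 0 ≤ c * C * (∫ ω, Z ω ∂μ) * ∫ ω, h ω ∂μ := by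
    have : 0 ≤ ∫ ω, Z ω ∂μ := integral_nonneg hZ0
    have : 0 ≤ ∫ ω, h ω ∂μ := integral_nonneg hh0
    positivity
  by_cases hZh : Integrable (fun ω => Z ω * h ω) μ
  swap
  · rwa [integral_undef hZh]
  have hYh_int : Integrable (fun ω => Y ω * h ω) μ :=
    hZh.mono' (hY.aestronglyMeasurable.mul hh) (ae_of_all _ fun ω => by
      rw [Real.norm_of_nonneg (mul_nonneg (hY0 ω) (hh0 ω))]
      exact mul_le_mul_of_nonneg_right (hYZ ω) (hh0 ω))
  calc ∫ ω, Z ω * h ω ∂μ ≤ ∫ ω, c * (Y ω * h ω) ∂μ :=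
        integral_mono hZh (hYh_int.const_mul c) fun ω => by
          rw [← mul_assoc]
          exact mul_le_mul_of_nonneg_right (hZY ω) (hh0 ω)
    _ = c * ∫ ω, Y ω * h ω ∂μ := integral_const_mul c _
    _ ≤ c * (C * (∫ ω, Y ω ∂μ) * ∫ ω, h ω ∂μ) := mul_le_mul_of_nonneg_left hYh hc
    _ ≤ c * C * (∫ ω, Z ω ∂μ) * ∫ ω, h ω ∂μ := by
        have := integral_mono hY hZ hYZ
        have : 0 ≤ ∫ ω, h ω ∂μ := integral_nonneg hh0
        rw [← mul_assoc, mul_assoc c C]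
        gcongr

lemma rpow_neg_le_mul_rpow_neg {x u c t : ℝ} (hx : 0 < x) (hu : u ≤ c * x) (hxu : x ≤ u)
    (hc : 1 ≤ c) (ht0 : 0 ≤ t) (ht1 : t ≤ 1) : x ^ (-t) ≤ c * u ^ (-t) := by
  have hu0 : 0 < u := hx.trans_le hxu
  calc x ^ (-t) ≤ (u / c) ^ (-t) :=
        Real.rpow_le_rpow_of_nonpos (by positivity) ((div_le_iff₀' (by positivity)).2 hu)
          (by linarith)
    _ = c ^ t * u ^ (-t) := by
        rw [Real.div_rpow hu0.le (by positivity), Real.rpow_neg (x := c) (by positivity),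
          div_inv_eq_mul, mul_comm]
    _ ≤ c * u ^ (-t) := by
        gcongr
        exact Real.rpow_le_self_of_one_le hc ht1

instance : DiscreteMeasurableSpace ℕ+ := ⟨fun _ => MeasurableSpace.measurableSet_top⟩

lemma finAlg_le (m : ℕ) : finAlg m ≤ (inferInstance : MeasurableSpace (ℕ → ℕ+)) :=
  (measurable_pi_lambda _ fun _ => measurable_pi_apply _).comap_le

lemma measurable_finAlg_of_forall_eq {β : Type*} [MeasurableSpace β] {m : ℕ}
    {f : (ℕ → ℕ+) → β} (hf : ∀ ω ω', (∀ i < m, ω i = ω' i) → f ω = f ω') :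
    Measurable[finAlg m] f := by
  let extend : (Fin m → ℕ+) → ℕ → ℕ+ := fun v i => if h : i < m then v ⟨i, h⟩ else 1
  have hfac : f = (f ∘ extend) ∘ fun ω (i : Fin m) => ω i :=
    funext fun ω => hf _ _ fun i hi => by simp [extend, hi]
  rw [hfac]
  exact (measurable_of_countable _).comp (comap_measurable _)

def cfDigits (ω : ℕ → ℕ+) : ℕ → ℕ := fun i => ω (i - 1)

lemma one_le_cfDigits (ω : ℕ → ℕ+) (i : ℕ) : 1 ≤ cfDigits ω (i + 1) := (ω _).pos

lemma Xtail_one (ω : ℕ → ℕ+) : Xtail ω 1 = cfVal (cfDigits ω) := rfl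

lemma measurable_finAlg_cfConv {m n : ℕ} (hn : n ≤ m) :
    Measurable[finAlg m] fun ω => cfConv (cfDigits ω) n :=
  measurable_finAlg_of_forall_eq fun ω ω' h =>
    cfConv_congr n fun i hi => by simp only [cfDigits, Nat.add_sub_cancel, h i (by omega)]

lemma measurable_Xtail_one : Measurable fun ω => Xtail ω 1 :=
  measurable_of_tendsto_metrizable
    (fun _ => (measurable_finAlg_cfConv le_rfl).mono (finAlg_le _) le_rfl)
    (tendsto_pi_nhds.2 fun ω => tendsto_cfConv (one_le_cfDigits ω))

lemma Xtail_one_pos (ω : ℕ → ℕ+) : 0 < Xtail ω 1 :=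
  (by positivity : (0 : ℝ) < 1 / ((cfDigits ω 1 : ℝ) + 1)).trans_le
    (one_div_succ_le_cfVal (one_le_cfDigits ω))

lemma exists_finAlg_measurable_approx_Xtail_one {ε : ℝ} (hε : 0 < ε) :
    ∃ m, 1 ≤ m ∧ ∃ U : (ℕ → ℕ+) → ℝ, Measurable[finAlg m] U ∧
      ∀ ω, Xtail ω 1 ≤ U ω ∧ U ω ≤ (1 + ε) * Xtail ω 1 := by
  obtain ⟨k, hk⟩ := pow_unbounded_of_one_lt ε⁻¹ one_lt_two
  refine ⟨2 * k + 2, by omega,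
    fun ω => max (cfConv (cfDigits ω) (2 * k + 1)) (cfConv (cfDigits ω) (2 * k + 2)),
    (measurable_finAlg_cfConv (by omega)).max (measurable_finAlg_cfConv le_rfl),
    fun ω => ⟨(cfVal_mem_uIcc (one_le_cfDigits ω) _).2, ?_⟩⟩
  have hQ : (2 : ℝ) ^ k ≤ cfQ (cfDigits ω) (2 * k + 2) := by
    exact_mod_cast two_pow_le_cfQ (one_le_cfDigits ω) k
  have hQε : 1 / (cfQ (cfDigits ω) (2 * k + 2) : ℝ) ≤ ε := by
    rw [div_le_iff₀ (cfQ_succ_pos (one_le_cfDigits ω) _), ← div_le_iff₀' hε, one_div]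
    exact hk.le.trans hQ
  calc _ ≤ (1 + 1 / (cfQ (cfDigits ω) (2 * k + 2) : ℝ)) * cfVal (cfDigits ω) :=
        max_cfConv_le (one_le_cfDigits ω) (by omega)
    _ ≤ (1 + ε) * Xtail ω 1 := by
        have := Xtail_one_pos ω
        rw [Xtail_one] at this ⊢
        gcongr

lemma integrable_Xtail_one_rpow_neg {P : Measure (ℕ → ℕ+)} {t : ℝ} (ht : 0 ≤ t)
    (hmom : Integrable (fun ω : ℕ → ℕ+ => ((ω 0 : ℕ) : ℝ) ^ t) P) :
    Integrable (fun ω => Xtail ω 1 ^ (-t)) P := by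
  refine (hmom.const_mul (2 ^ t)).mono' (measurable_Xtail_one.pow_const _).aestronglyMeasurable
    (ae_of_all _ fun ω => ?_)
  have hA : (1 : ℝ) ≤ (ω 0 : ℕ) := by exact_mod_cast (ω 0).pos
  have hX : 1 / ((ω 0 : ℕ) + 1 : ℝ) ≤ Xtail ω 1 := one_div_succ_le_cfVal (one_le_cfDigits ω)
  rw [Real.norm_of_nonneg (Real.rpow_nonneg (Xtail_one_pos ω).le _)]
  calc Xtail ω 1 ^ (-t) ≤ (1 / ((ω 0 : ℕ) + 1 : ℝ)) ^ (-t) :=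
        Real.rpow_le_rpow_of_nonpos (by positivity) hX (by linarith)
    _ = ((ω 0 : ℕ) + 1 : ℝ) ^ t := by
        rw [one_div, Real.inv_rpow (by positivity), Real.rpow_neg (by positivity), inv_inv]
    _ ≤ (2 * (ω 0 : ℕ) : ℝ) ^ t := Real.rpow_le_rpow (by positivity) (by linarith) ht
    _ = 2 ^ t * ((ω 0 : ℕ) : ℝ) ^ t := Real.mul_rpow zero_le_two (by positivity)

lemma PsiMixing.exists_integral_mul_le {P : Measure (ℕ → ℕ+)} (hmix : PsiMixing P)
    {δ : ℝ} (hδ : 0 < δ) :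
    ∃ n, 1 ≤ n ∧ ∀ m, 1 ≤ m → ∀ f g : (ℕ → ℕ+) → ℝ, Integrable f P → Integrable g P →
      Measurable[finAlg m] f → Measurable[tailAlg (m + n - 1)] g →
      (∀ ω, 0 ≤ f ω) → (∀ ω, 0 ≤ g ω) →
      ∫ ω, f ω * g ω ∂P ≤ (1 + δ) * (∫ ω, f ω ∂P) * ∫ ω, g ω ∂P := by
  obtain ⟨-, ψ, hψ0, hψ, hcov⟩ := hmix
  obtain ⟨n, hnδ, hn⟩ := ((hψ.eventually (gt_mem_nhds hδ)).and (eventually_ge_atTop 1)).exists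
  refine ⟨n, hn, fun m hm f g hf hg hfm hgm hf0 hg0 => ?_⟩
  have h := (abs_le.1 (hcov m n hm hn f g hf hg hfm hgm)).2
  simp only [abs_of_nonneg (hf0 _), abs_of_nonneg (hg0 _)] at h
  have hfg : 0 ≤ (∫ ω, f ω ∂P) * ∫ ω, g ω ∂P :=
    mul_nonneg (integral_nonneg hf0) (integral_nonneg hg0)
  nlinarith [hψ0 n]

theorem mixing_negative_moment_bound_general (P : Measure (ℕ → ℕ+))
    (hmix : PsiMixing P)
    (hmom : ∀ s : ℝ, 0 < s → s < 1 →
      Integrable (fun ω : ℕ → ℕ+ => ((ω 0 : ℕ) : ℝ) ^ s) P)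
    (t : ℝ) (ht0 : 0 < t) (ht1 : t < 1)
    (ε : ℝ) (hε : 0 < ε) :
    ∃ N : ℕ, 0 < N ∧ ∀ g : (ℕ → ℕ+) → ℝ, Integrable g P →
      Measurable[tailAlg (N - 1)] g →
      ∫ ω, (Xtail ω 1) ^ (-t) * |g ω| ∂P ≤
        (1 + ε) ^ 2 * (∫ ω, (Xtail ω 1) ^ (-t) ∂P) * (∫ ω, |g ω| ∂P) := by
  obtain ⟨n, hn, hmixn⟩ := hmix.exists_integral_mul_le hε
  obtain ⟨m, hm, U, hUm, hXU⟩ := exists_finAlg_measurable_approx_Xtail_one hε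
  refine ⟨m + n, by omega, fun g hg hgm => ?_⟩
  have hX := integrable_Xtail_one_rpow_neg ht0.le (hmom t ht0 ht1)
  have hU0 : ∀ ω, 0 < U ω := fun ω => (Xtail_one_pos ω).trans_le (hXU ω).1
  have hUX : ∀ ω, U ω ^ (-t) ≤ Xtail ω 1 ^ (-t) := fun ω =>
    Real.rpow_le_rpow_of_nonpos (Xtail_one_pos ω) (hXU ω).1 (by linarith)
  have hYm : Measurable[finAlg m] fun ω => U ω ^ (-t) := hUm.pow_const _
  have hY : Integrable (fun ω => U ω ^ (-t)) P :=
    hX.mono' (hYm.mono (finAlg_le m) le_rfl).aestronglyMeasurable (ae_of_all _ fun ω => by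
      rw [Real.norm_of_nonneg (Real.rpow_nonneg (hU0 ω).le _)]
      exact hUX ω)
  rw [sq]
  exact integral_mul_le_of_le_of_le_mul hY hX hg.abs.aestronglyMeasurable
    (fun ω => Real.rpow_nonneg (hU0 ω).le _) hUX
    (fun ω => rpow_neg_le_mul_rpow_neg (Xtail_one_pos ω) (hXU ω).2 (hXU ω).1 (by linarith)
      ht0.le ht1.le)
    (fun ω => abs_nonneg _) (by linarith) (by linarith)
    (hmixn m hm _ _ hY hg.abs hYm (measurable_abs.comp hgm)
      (fun ω => Real.rpow_nonneg (hU0 ω).le _) (fun ω => abs_nonneg _))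

/-- If `{A_n}` is ψ-mixing and `E(A_1^s) < ∞` for each `0 < s < 1`, then for
every `0 < t < 1` and every `ε > 0` there exists `N > 0` such that for every
integrable `g` measurable with respect to `σ(A_N, A_{N+1}, …)`, one has
`E(X_1^{−t} |g|) ≤ (1+ε)² E(X_1^{−t}) E(|g|)`. -/
theorem mixing_negative_moment_bound (P : Measure (ℕ → ℕ+)) [IsProbabilityMeasure P]
    (hmix : PsiMixing P)
    (hmom : ∀ s : ℝ, 0 < s → s < 1 →
      Integrable (fun ω : ℕ → ℕ+ => ((ω 0 : ℕ) : ℝ) ^ s) P)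
    (t : ℝ) (ht0 : 0 < t) (ht1 : t < 1)
    (ε : ℝ) (hε : 0 < ε) :
    ∃ N : ℕ, 0 < N ∧ ∀ g : (ℕ → ℕ+) → ℝ, Integrable g P →
      Measurable[tailAlg (N - 1)] g →
      ∫ ω, (Xtail ω 1) ^ (-t) * |g ω| ∂P ≤
        (1 + ε) ^ 2 * (∫ ω, (Xtail ω 1) ^ (-t) ∂P) * (∫ ω, |g ω| ∂P) :=
  mixing_negative_moment_bound_general P hmix hmom t ht0 ht1 ε hε
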